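/- arXiv:1205.2036 — 2 statements merged into one kernel-verified Lean document; each statement's English description precedes it below -/
import Mathlib

section
/- Let f be a normal function with hyperation F. Then for every ordinal α, F (ω^(α+1)) = Ordinal.deriv (F (ω^α)), i.e., the ω^(α+1)-th hyperate of f is the derivative (the normal function enumerating the fixed points) of the ω^α-th hyperate of f. -/
open Ordinal

/-- An ordinal function is *initial* if it maps every initial segment onto an initial segment. -/
def Initial (g : Ordinal → Ordinal) : Prop :=
  ∀ β : Ordinal, ∃ γ : Ordinal, g '' {α | α < β} = {α | α < γ}

/-- A *weak hyperation* of a normal function `f`. -/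
def WeakHyperation (f : Ordinal → Ordinal) (g : Ordinal → Ordinal → Ordinal) : Prop :=
  (∀ ξ : Ordinal, Order.IsNormal (g ξ)) ∧ g 0 = id ∧ g 1 = f ∧
    ∀ ξ ζ : Ordinal, g (ξ + ζ) = g ξ ∘ g ζ

/-- `F` is *the hyperation* of `f`: the pointwise minimal weak hyperation. -/
def IsHyperation (f : Ordinal → Ordinal) (F : Ordinal → Ordinal → Ordinal) : Prop :=
  WeakHyperation f F ∧
    ∀ h : Ordinal → Ordinal → Ordinal, WeakHyperation f h → ∀ ξ ζ : Ordinal, F ξ ζ ≤ h ξ ζ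

/-- A *weak cohyperation* of an initial function `f`. -/
def WeakCohyperation (f : Ordinal → Ordinal) (g : Ordinal → Ordinal → Ordinal) : Prop :=
  (∀ ξ : Ordinal, Initial (g ξ)) ∧ g 0 = id ∧ g 1 = f ∧
    ∀ ξ ζ : Ordinal, g (ξ + ζ) = g ζ ∘ g ξ

/-- `G` is *the cohyperation* of `f`: the pointwise maximal weak cohyperation. -/
def IsCohyperation (f : Ordinal → Ordinal) (G : Ordinal → Ordinal → Ordinal) : Prop :=
  WeakCohyperation f G ∧
    ∀ h : Ordinal → Ordinal → Ordinal, WeakCohyperation f h → ∀ ξ α : Ordinal, h ξ α ≤ G ξ α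

/-- `g` is a *left adjoint* of `f`. -/
def LeftAdjoint (f g : Ordinal → Ordinal) : Prop :=
  ∀ α β : Ordinal, (α = f β → g α = β) ∧ (α < f β → g α < β)

/-!
Put `g = F (ω ^ α)` and `E = ω ^ (α + 1)`. Since `ω ^ α + E = E`, every value of `F E` is a fixed
point of `g`, hence `deriv g ≤ F E`. Conversely, `F r` fixes every fixed point of `g` for `r < E`,
because `r ≤ ω ^ α * n` for some `n < ω`. So if `K` is any weak hyperation of `deriv g`, gluing
`ξ = E * q + r ↦ K q ∘ F r` gives a weak hyperation of `f` whose `E`-th member is `deriv g`, and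
minimality of `F` yields `F E ≤ deriv g`. A weak hyperation of a normal function `D` is read off
from Cantor normal forms, `ω ^ a + t ↦ φ_a ∘ K t`, where `φ` is the Veblen hierarchy over `D`;
for `D = deriv g` the family `a ↦ F (E * ω ^ a)` dominates `φ`, which guarantees that the common
fixed points enumerated by `φ` exist.
-/

open Order

universe u v

namespace WeakHyperation

variable {f : Ordinal.{u} → Ordinal.{u}} {F : Ordinal.{v} → Ordinal.{u} → Ordinal.{u}}
  {ξ ζ α r : Ordinal.{v}} {x : Ordinal.{u}}

theorem isNormal (hF : WeakHyperation f F) (ξ : Ordinal.{v}) : IsNormal (F ξ) := hF.1 ξ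

theorem map_zero (hF : WeakHyperation f F) : F 0 = id := hF.2.1

theorem map_one (hF : WeakHyperation f F) : F 1 = f := hF.2.2.1

theorem map_add (hF : WeakHyperation f F) (ξ ζ : Ordinal.{v}) : F (ξ + ζ) = F ξ ∘ F ζ :=
  hF.2.2.2 ξ ζ

theorem map_add_apply (hF : WeakHyperation f F) (ξ ζ : Ordinal.{v}) (x : Ordinal.{u}) :
    F (ξ + ζ) x = F ξ (F ζ x) :=
  congrFun (hF.map_add ξ ζ) x

theorem apply_apply_of_add_eq (hF : WeakHyperation f F) (h : ξ + ζ = ζ) (x : Ordinal.{u}) :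
    F ξ (F ζ x) = F ζ x := by
  rw [← hF.map_add_apply, h]

theorem apply_le_apply_of_le (hF : WeakHyperation f F) (h : ξ ≤ ζ) (x : Ordinal.{u}) :
    F ξ x ≤ F ζ x := by
  rw [← Ordinal.add_sub_cancel_of_le h, hF.map_add_apply]
  exact (hF.isNormal ξ).strictMono.monotone (hF.isNormal _).strictMono.le_apply

theorem apply_mul_natCast_of_apply_eq (hF : WeakHyperation f F) (hx : F ξ x = x) (n : ℕ) :
    F (ξ * n) x = x := by
  induction n with
  | zero => simp [hF.map_zero]
  | succ n ih => rw [Nat.cast_succ, mul_add_one, hF.map_add_apply, hx, ih]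

theorem apply_eq_of_lt_opow_succ (hF : WeakHyperation f F) (hx : F (ω ^ α) x = x)
    (hr : r < ω ^ (α + 1)) : F r x = x := by
  rw [opow_add_one] at hr
  obtain ⟨c, hc, hrc⟩ := (lt_mul_iff_of_isSuccLimit isSuccLimit_omega0).1 hr
  obtain ⟨n, rfl⟩ := lt_omega0.1 hc
  refine le_antisymm ?_ (hF.isNormal r).strictMono.le_apply
  exact (hF.apply_le_apply_of_le hrc.le x).trans (hF.apply_mul_natCast_of_apply_eq hx n).le

theorem apply_opow_apply_opow_succ (hF : WeakHyperation f F) (α : Ordinal.{v})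
    (x : Ordinal.{u}) : F (ω ^ α) (F (ω ^ (α + 1)) x) = F (ω ^ (α + 1)) x :=
  hF.apply_apply_of_add_eq (add_omega0_opow ((opow_lt_opow_iff_right one_lt_omega0).2
    (lt_add_one α))) x

theorem deriv_le_opow_succ (hF : WeakHyperation f F) (α : Ordinal.{v}) :
    deriv (F (ω ^ α)) ≤ F (ω ^ (α + 1)) := by
  have hmono := (hF.isNormal (ω ^ (α + 1))).strictMono
  rw [deriv_eq_enumOrd (hF.isNormal _), ← enumOrd_range hmono]
  refine enumOrd_le_of_subset hmono.not_bddAbove_range_of_wellFoundedLT ?_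
  rintro _ ⟨x, rfl⟩
  exact hF.apply_opow_apply_opow_succ α x

end WeakHyperation

/-- The Veblen hierarchy over `D`, as `Ordinal.veblenWith`, but indexed by ordinals of an arbitrary
universe. Then the common fixed points of `a`-many normal functions need not be unbounded, so its
properties are established only under an `IsVeblenMajorant`, which bounds it from above. -/
noncomputable def veblenHierarchy (D : Ordinal.{u} → Ordinal.{u}) :
    Ordinal.{v} → Ordinal.{u} → Ordinal.{u}
  | a => if a = 0 then D else enumOrd {x | ∀ b < a, veblenHierarchy D b x = x}
termination_by a => a
decreasing_by exact ‹_›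

structure IsVeblenMajorant (D : Ordinal.{u} → Ordinal.{u})
    (M : Ordinal.{v} → Ordinal.{u} → Ordinal.{u}) : Prop where
  isNormal (a : Ordinal.{v}) : IsNormal (M a)
  apply_apply_of_lt {b a : Ordinal.{v}} (h : b < a) (x : Ordinal.{u}) : M b (M a x) = M a x
  le_zero : D ≤ M 0

theorem WeakHyperation.isVeblenMajorant {f D : Ordinal.{u} → Ordinal.{u}}
    {F : Ordinal.{v} → Ordinal.{u} → Ordinal.{u}} (hF : WeakHyperation f F) {c : Ordinal.{v}}
    (hD : D ≤ F c) : IsVeblenMajorant D fun a => F (c * ω ^ a) where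
  isNormal _ := hF.isNormal _
  apply_apply_of_lt h := hF.apply_apply_of_add_eq <| by
    rw [← mul_add, add_omega0_opow ((opow_lt_opow_iff_right one_lt_omega0).2 h)]
  le_zero := by simpa using hD

section veblenHierarchy

variable {D : Ordinal.{u} → Ordinal.{u}} {M : Ordinal.{v} → Ordinal.{u} → Ordinal.{u}}

@[simp]
theorem veblenHierarchy_zero (D : Ordinal.{u} → Ordinal.{u}) : veblenHierarchy.{u, v} D 0 = D := by
  rw [veblenHierarchy, if_pos rfl]

theorem veblenHierarchy_of_ne_zero (D : Ordinal.{u} → Ordinal.{u}) {a : Ordinal.{v}} (ha : a ≠ 0) :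
    veblenHierarchy D a = enumOrd {x | ∀ b < a, veblenHierarchy D b x = x} := by
  rw [veblenHierarchy, if_neg ha]

theorem veblenHierarchy_spec (hD : IsNormal D) (hM : IsVeblenMajorant D M) (a : Ordinal.{v}) :
    IsNormal (veblenHierarchy D a) ∧ veblenHierarchy D a ≤ M a ∧
      ∀ b < a, ∀ x, veblenHierarchy D b (veblenHierarchy D a x) = veblenHierarchy D a x := by
  induction a using WellFoundedLT.induction with | _ a ih => ?_
  obtain rfl | ha := eq_or_ne a 0
  · exact ⟨by rwa [veblenHierarchy_zero], by simpa using hM.le_zero, by simp⟩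
  set S := {x | ∀ b < a, veblenHierarchy D b x = x}
  have hMS : Set.range (M a) ⊆ S := by
    rintro _ ⟨x, rfl⟩ b hb
    refine le_antisymm ?_ (ih b hb).1.strictMono.le_apply
    exact ((ih b hb).2.1 _).trans_eq (hM.apply_apply_of_lt hb x)
  have hMa := (hM.isNormal a).strictMono
  have hS : ¬ BddAbove S := fun h => hMa.not_bddAbove_range_of_wellFoundedLT (h.mono hMS)
  rw [veblenHierarchy_of_ne_zero D ha]
  refine ⟨isNormal_enumOrd (fun t htS ht htb b hb => ?_) hS, ?_,
    fun b hb x => enumOrd_mem hS x b hb⟩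
  · rw [(ih b hb).1.map_sSup ht htb, Set.image_congr fun x hx => htS hx b hb, Set.image_id']
  · rw [← enumOrd_range hMa]
    exact enumOrd_le_of_subset hMa.not_bddAbove_range_of_wellFoundedLT hMS

theorem isNormal_veblenHierarchy (hD : IsNormal D) (hM : IsVeblenMajorant D M) (a : Ordinal.{v}) :
    IsNormal (veblenHierarchy D a) :=
  (veblenHierarchy_spec hD hM a).1

theorem veblenHierarchy_veblenHierarchy_of_lt (hD : IsNormal D) (hM : IsVeblenMajorant D M)
    {b a : Ordinal.{v}} (h : b < a) (x : Ordinal.{u}) :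
    veblenHierarchy D b (veblenHierarchy D a x) = veblenHierarchy D a x :=
  (veblenHierarchy_spec hD hM a).2.2 b h x

end veblenHierarchy

namespace Ordinal

theorem sub_opow_log_lt_self {q : Ordinal} (hq : q ≠ 0) : q - ω ^ log ω q < q := by
  rw [Ordinal.sub_lt_of_le (opow_log_le_self ω hq)]
  refine (le_add_self).lt_of_ne fun h => ?_
  have := add_eq_right_iff_mul_omega0_le.1 h.symm
  rw [← opow_add_one] at this
  exact (lt_opow_succ_log_self one_lt_omega0 q).not_ge this

theorem add_div_mod_opow_of_lt (ξ : Ordinal) {ζ β : Ordinal} (h : ζ < ω ^ β) :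
    (ξ + ζ) / ω ^ β = ξ / ω ^ β ∧ (ξ + ζ) % ω ^ β = ξ % ω ^ β + ζ := by
  have hE : ω ^ β ≠ 0 := opow_ne_zero β omega0_ne_zero
  have hlt : ξ % ω ^ β + ζ < ω ^ β := isPrincipal_add_omega0_opow β (mod_lt ξ hE) h
  have hsum : ξ + ζ = ω ^ β * (ξ / ω ^ β) + (ξ % ω ^ β + ζ) := by
    rw [← add_assoc, div_add_mod]
  rw [hsum, mul_add_div _ hE, mul_add_mod_self, div_eq_zero_of_lt hlt, add_zero, mod_eq_of_lt hlt]
  exact ⟨rfl, rfl⟩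

theorem add_div_mod_opow_of_le (ξ : Ordinal) {ζ β : Ordinal} (h : ω ^ β ≤ ζ) :
    (ξ + ζ) / ω ^ β = ξ / ω ^ β + ζ / ω ^ β ∧ (ξ + ζ) % ω ^ β = ζ % ω ^ β := by
  have hE : ω ^ β ≠ 0 := opow_ne_zero β omega0_ne_zero
  have hsum : ξ + ζ = ω ^ β * (ξ / ω ^ β) + ζ := by
    conv_lhs => rw [← div_add_mod ξ (ω ^ β), add_assoc, add_of_omega0_opow_le (mod_lt ξ hE) h]
  rw [hsum, mul_add_div _ hE, mul_add_mod_self]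
  exact ⟨rfl, rfl⟩

end Ordinal

noncomputable def cnfHyperation (D : Ordinal.{u} → Ordinal.{u}) :
    Ordinal.{v} → Ordinal.{u} → Ordinal.{u}
  | q => if q = 0 then id else veblenHierarchy D (log ω q) ∘ cnfHyperation D (q - ω ^ log ω q)
termination_by q => q
decreasing_by exact sub_opow_log_lt_self ‹_›

section cnfHyperation

variable {D : Ordinal.{u} → Ordinal.{u}} {M : Ordinal.{v} → Ordinal.{u} → Ordinal.{u}}

theorem cnfHyperation_zero (D : Ordinal.{u} → Ordinal.{u}) : cnfHyperation.{u, v} D 0 = id := by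
  rw [cnfHyperation, if_pos rfl]

theorem cnfHyperation_of_ne_zero (D : Ordinal.{u} → Ordinal.{u}) {q : Ordinal.{v}} (hq : q ≠ 0) :
    cnfHyperation D q = veblenHierarchy D (log ω q) ∘ cnfHyperation D (q - ω ^ log ω q) := by
  rw [cnfHyperation, if_neg hq]

variable (hD : IsNormal D) (hM : IsVeblenMajorant D M)
include hD hM

theorem cnfHyperation_opow_add (a t : Ordinal.{v}) :
    cnfHyperation D (ω ^ a + t) = veblenHierarchy D a ∘ cnfHyperation D t := by
  have hpos : ω ^ a + t ≠ 0 := (opow_ne_zero a omega0_ne_zero) ∘ (add_eq_zero_iff.1 · |>.1)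
  obtain ht | ht := lt_or_ge t (ω ^ (a + 1))
  · have hlog : log ω (ω ^ a + t) = a := by
      refine (log_eq_iff one_lt_omega0 hpos a).2 ⟨le_self_add, ?_⟩
      exact isPrincipal_add_omega0_opow _
        ((opow_lt_opow_iff_right one_lt_omega0).2 (lt_add_one a)) ht
    rw [cnfHyperation_of_ne_zero D hpos, hlog, Ordinal.add_sub_cancel]
  · have ht0 : t ≠ 0 := fun h => opow_ne_zero (a + 1) omega0_ne_zero (by simp [h] at ht)
    have hlog : a < log ω t :=
      (lt_add_one a).trans_le ((opow_le_iff_le_log one_lt_omega0 ht0).1 ht)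
    rw [add_of_omega0_opow_le ((opow_lt_opow_iff_right one_lt_omega0).2 (lt_add_one a)) ht,
      cnfHyperation_of_ne_zero D ht0]
    funext x
    exact (veblenHierarchy_veblenHierarchy_of_lt hD hM hlog _).symm

theorem isNormal_cnfHyperation (q : Ordinal.{v}) : IsNormal (cnfHyperation D q) := by
  induction q using WellFoundedLT.induction with | _ q ih => ?_
  obtain rfl | hq := eq_or_ne q 0
  · rw [cnfHyperation_zero]
    exact .id
  · rw [cnfHyperation_of_ne_zero D hq]
    exact (isNormal_veblenHierarchy hD hM _).comp (ih _ (sub_opow_log_lt_self hq))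

theorem cnfHyperation_add (p q : Ordinal.{v}) :
    cnfHyperation D (p + q) = cnfHyperation D p ∘ cnfHyperation D q := by
  induction p using WellFoundedLT.induction with | _ p ih => ?_
  obtain rfl | hp := eq_or_ne p 0
  · rw [zero_add, cnfHyperation_zero, Function.id_comp]
  · conv_lhs => rw [← Ordinal.add_sub_cancel_of_le (opow_log_le_self ω hp), add_assoc,
      cnfHyperation_opow_add hD hM, ih _ (sub_opow_log_lt_self hp)]
    rw [cnfHyperation_of_ne_zero D hp, Function.comp_assoc]

theorem weakHyperation_cnfHyperation : WeakHyperation D (cnfHyperation.{u, v} D) := by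
  refine ⟨isNormal_cnfHyperation hD hM, cnfHyperation_zero D, ?_, cnfHyperation_add hD hM⟩
  simpa [cnfHyperation_zero] using cnfHyperation_opow_add hD hM 0 0

end cnfHyperation

noncomputable def glueHyperation (K F : Ordinal.{v} → Ordinal.{u} → Ordinal.{u})
    (β ξ : Ordinal.{v}) : Ordinal.{u} → Ordinal.{u} :=
  K (ξ / ω ^ β) ∘ F (ξ % ω ^ β)

section glueHyperation

variable {f D : Ordinal.{u} → Ordinal.{u}} {F K : Ordinal.{v} → Ordinal.{u} → Ordinal.{u}}
  {β : Ordinal.{v}}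

theorem glueHyperation_add (hF : WeakHyperation f F) (hK : WeakHyperation D K)
    (hfix : ∀ r < ω ^ β, ∀ x, F r (D x) = D x) (ξ ζ : Ordinal.{v}) :
    glueHyperation K F β (ξ + ζ) = glueHyperation K F β ξ ∘ glueHyperation K F β ζ := by
  unfold glueHyperation
  have hE : ω ^ β ≠ 0 := opow_ne_zero β omega0_ne_zero
  obtain hζ | hζ := lt_or_ge ζ (ω ^ β)
  · obtain ⟨hdiv, hmod⟩ := add_div_mod_opow_of_lt ξ hζ
    rw [hdiv, hmod, div_eq_zero_of_lt hζ, mod_eq_of_lt hζ, hK.map_zero, hF.map_add]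
    rfl
  · obtain ⟨hdiv, hmod⟩ := add_div_mod_opow_of_le ξ hζ
    have hone : 1 ≤ ζ / ω ^ β := (mul_le_iff_le_div hE).1 (by rwa [mul_one])
    -- members of `K` of nonzero index take values in the range of `D = K 1`
    have hfixK (x : Ordinal.{u}) : F (ξ % ω ^ β) (K (ζ / ω ^ β) x) = K (ζ / ω ^ β) x := by
      rw [← Ordinal.add_sub_cancel_of_le hone, hK.map_add_apply, hK.map_one]
      exact hfix _ (mod_lt ξ hE) _
    rw [hdiv, hmod, hK.map_add]
    funext x
    simp only [Function.comp_apply, hfixK]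

theorem weakHyperation_glueHyperation (hF : WeakHyperation f F) (hK : WeakHyperation D K)
    (hβ : β ≠ 0) (hfix : ∀ r < ω ^ β, ∀ x, F r (D x) = D x) :
    WeakHyperation f (glueHyperation K F β) := by
  have h1 : 1 < ω ^ β := one_lt_opow.2 ⟨one_lt_omega0, hβ⟩
  refine ⟨fun ξ => (hK.isNormal _).comp (hF.isNormal _), ?_, ?_, glueHyperation_add hF hK hfix⟩
  · simp [glueHyperation, hK.map_zero, hF.map_zero]
  · rw [glueHyperation, div_eq_zero_of_lt h1, mod_eq_of_lt h1, hK.map_zero, hF.map_one]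
    rfl

theorem glueHyperation_opow (hF : WeakHyperation f F) (hK : WeakHyperation D K) :
    glueHyperation K F β (ω ^ β) = D := by
  simp [glueHyperation, Ordinal.div_self, hK.map_one, hF.map_zero]

end glueHyperation

theorem hyperation_succ_veblen_general (f : Ordinal → Ordinal)
    (F : Ordinal → Ordinal → Ordinal) (hF : IsHyperation f F) :
    ∀ α : Ordinal, F (Ordinal.omega0 ^ (α + 1)) = Ordinal.deriv (F (Ordinal.omega0 ^ α)) := by
  obtain ⟨hF, hmin⟩ := hF
  intro α
  have hderiv := hF.deriv_le_opow_succ α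
  have hK := weakHyperation_cnfHyperation (isNormal_deriv _) (hF.isVeblenMajorant hderiv)
  have hfix : ∀ r < ω ^ (α + 1), ∀ x, F r (deriv (F (ω ^ α)) x) = deriv (F (ω ^ α)) x :=
    fun r hr x => hF.apply_eq_of_lt_opow_succ (deriv_fp (hF.isNormal _) x) hr
  have hglue := weakHyperation_glueHyperation hF hK (lt_add_one α).ne_bot hfix
  refine le_antisymm (fun ζ => ?_) hderiv
  simpa only [glueHyperation_opow hF hK] using hmin _ hglue (ω ^ (α + 1)) ζ

theorem hyperation_succ_veblen (f : Ordinal → Ordinal) (hf : Order.IsNormal f)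
    (F : Ordinal → Ordinal → Ordinal) (hF : IsHyperation f F) :
    ∀ α : Ordinal, F (Ordinal.omega0 ^ (α + 1)) = Ordinal.deriv (F (Ordinal.omega0 ^ α)) :=
  hyperation_succ_veblen_general f F hF
end

section
/- Let f be an initial function with cohyperation G, let ξ be an ordinal, and let H be the cohyperation of the initial function G ξ. Then for every ordinal ζ, H ζ = G (ξ * ζ), where ξ * ζ is ordinal multiplication. -/
open Ordinal

/-!
The family `ζ ↦ G (ξ * ζ)` is a weak cohyperation of `G ξ`, so `G (ξ * ζ) ≤ H ζ` by maximality
of `H`. For the converse, induct on `ζ`: both sides turn sums into compositions, so only additively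
principal `ζ = μ > 1` remains. Then `ϖ = ξ * μ` is additively principal too, and
`η ↦ G (η % ϖ) ∘ H (μ * (η / ϖ))` is a weak cohyperation of `f`: for `q ≠ 0`, `H (μ * q)` absorbs
every `G ρ` with `ρ < ϖ`. Its value at `ϖ` is `H μ`, so `H μ ≤ G ϖ` by maximality of `G`.
-/

theorem Initial.apply_le {i : Ordinal → Ordinal} (hi : Initial i) (α : Ordinal) : i α ≤ α := by
  induction α using WellFoundedLT.induction with
  | _ α IH =>
  obtain ⟨γ, hγ⟩ := hi (Order.succ α)
  by_contra! hlt
  have hiα : i α ∈ {x | x < γ} := hγ ▸ ⟨α, Order.lt_succ α, rfl⟩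
  obtain ⟨β, hβ : β < Order.succ α, hβα⟩ : α ∈ i '' {β | β < Order.succ α} := hγ ▸ hlt.trans hiα
  rcases (Order.le_of_lt_succ hβ).lt_or_eq with hβα' | rfl
  · exact (IH β hβα').not_gt (hβα ▸ hβα')
  · exact hlt.ne' hβα

theorem Initial.comp {i j : Ordinal → Ordinal} (hj : Initial j) (hi : Initial i) :
    Initial (j ∘ i) := by
  intro β
  obtain ⟨γ, hγ⟩ := hi β
  obtain ⟨δ, hδ⟩ := hj γ
  exact ⟨δ, by rw [Set.image_comp, hγ, hδ]⟩

namespace WeakCohyperation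

variable {f : Ordinal → Ordinal} {g : Ordinal → Ordinal → Ordinal}

theorem initial (hg : WeakCohyperation f g) (ξ : Ordinal) : Initial (g ξ) := hg.1 ξ

theorem zero_eq_id (hg : WeakCohyperation f g) : g 0 = id := hg.2.1

theorem one_eq (hg : WeakCohyperation f g) : g 1 = f := hg.2.2.1

theorem add_eq_comp (hg : WeakCohyperation f g) (ξ ζ : Ordinal) : g (ξ + ζ) = g ζ ∘ g ξ :=
  hg.2.2.2 ξ ζ

theorem apply_add (hg : WeakCohyperation f g) (ξ ζ α : Ordinal) :
    g (ξ + ζ) α = g ζ (g ξ α) :=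
  congrFun (hg.add_eq_comp ξ ζ) α

theorem apply_le (hg : WeakCohyperation f g) (ξ α : Ordinal) : g ξ α ≤ α :=
  (hg.initial ξ).apply_le α

theorem apply_le_apply_of_le (hg : WeakCohyperation f g) {ξ ζ : Ordinal} (h : ξ ≤ ζ)
    (α : Ordinal) : g ζ α ≤ g ξ α := by
  rw [← Ordinal.add_sub_cancel_of_le h, hg.apply_add]
  exact hg.apply_le _ _

theorem mul_left (hg : WeakCohyperation f g) (ξ : Ordinal) :
    WeakCohyperation (g ξ) fun ζ ↦ g (ξ * ζ) :=
  ⟨fun _ ↦ hg.initial _, by simpa using hg.zero_eq_id, by simp,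
    fun ζ ζ' ↦ by simpa only [mul_add] using hg.add_eq_comp _ _⟩

/-- The sequence `n ↦ g (ξ * n) α` is antitone, so it is constant from its minimum on; there
the step `g r` with `r ≤ ξ` is squeezed between two equal terms. -/
theorem exists_natCast_mul_apply_eq (hg : WeakCohyperation f g) {r ξ : Ordinal} (hr : r ≤ ξ)
    (α : Ordinal) : ∃ n : ℕ, g (ξ * n) (g r α) = g (ξ * ↑(n + 1)) α := by
  set n := Function.argmin fun k : ℕ ↦ g (ξ * k) α
  refine ⟨n, le_antisymm ?_ ?_⟩
  · calc g (ξ * n) (g r α) = g (r + ξ * n) α := (hg.apply_add ..).symm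
      _ ≤ g (ξ * n) α := hg.apply_le_apply_of_le le_add_self α
      _ ≤ g (ξ * ↑(n + 1)) α := Function.argmin_le (fun k : ℕ ↦ g (ξ * k) α) _
  · rw [← hg.apply_add]
    apply hg.apply_le_apply_of_le
    calc r + ξ * n ≤ ξ + ξ * n := add_le_add_left hr _
      _ = ξ * ↑(n + 1) := by push_cast; rw [Nat.cast_add_one_comm, mul_add, mul_one]

theorem mod_comp_div (hg : WeakCohyperation f g) {l : Ordinal → Ordinal}
    {L : Ordinal → Ordinal → Ordinal} (hL : WeakCohyperation l L) {ϖ : Ordinal}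
    (hϖ : IsPrincipal (· + ·) ϖ) (h1 : 1 < ϖ) (habs : ∀ q ≠ 0, ∀ ρ < ϖ, L q ∘ g ρ = L q) :
    WeakCohyperation f fun η ↦ g (η % ϖ) ∘ L (η / ϖ) := by
  have hϖ0 : ϖ ≠ 0 := (zero_lt_one.trans h1).ne'
  have hdiv : ∀ q ρ, ρ < ϖ → (ϖ * q + ρ) / ϖ = q := fun q ρ hρ ↦ by
    rw [mul_add_div _ hϖ0, div_eq_zero_of_lt hρ, add_zero]
  have hmod : ∀ q ρ, ρ < ϖ → (ϖ * q + ρ) % ϖ = ρ := fun q ρ hρ ↦ by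
    rw [mul_add_mod_self, mod_eq_of_lt hρ]
  refine ⟨fun _ ↦ (hg.initial _).comp (hL.initial _), ?_, ?_, ?_⟩
  · simp [hg.zero_eq_id, hL.zero_eq_id]
  · show g (1 % ϖ) ∘ L (1 / ϖ) = f
    rw [mod_eq_of_lt h1, div_eq_zero_of_lt h1, hL.zero_eq_id, hg.one_eq, Function.comp_id]
  intro η η'
  obtain ⟨q, ρ, hρ, rfl⟩ : ∃ q ρ, ρ < ϖ ∧ ϖ * q + ρ = η := ⟨_, _, mod_lt η hϖ0, div_add_mod η ϖ⟩
  obtain ⟨q', ρ', hρ', rfl⟩ : ∃ q ρ, ρ < ϖ ∧ ϖ * q + ρ = η' :=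
    ⟨_, _, mod_lt η' hϖ0, div_add_mod η' ϖ⟩
  simp only [hdiv _ _ hρ, hmod _ _ hρ, hdiv _ _ hρ', hmod _ _ hρ']
  rcases eq_or_ne q' 0 with rfl | hq'
  · have hsum : ϖ * q + ρ + (ϖ * 0 + ρ') = ϖ * q + (ρ + ρ') := by
      rw [mul_zero, zero_add, add_assoc]
    rw [hsum, hdiv _ _ (hϖ hρ hρ'), hmod _ _ (hϖ hρ hρ'), hL.zero_eq_id, hg.add_eq_comp]
    rfl
  · have hsum : ϖ * q + ρ + (ϖ * q' + ρ') = ϖ * (q + q') + ρ' := by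
      rw [add_assoc, ← add_assoc ρ,
        hϖ.add_eq_right_of_le hρ (le_mul_left ϖ (pos_iff_ne_zero.2 hq')), ← add_assoc, mul_add]
    rw [hsum, hdiv _ _ hρ', hmod _ _ hρ', hL.add_eq_comp]
    exact congrArg (fun k ↦ g ρ' ∘ k ∘ L q) (habs q' hq' ρ hρ).symm

end WeakCohyperation

theorem IsCohyperation.weakCohyperation {f : Ordinal → Ordinal} {G : Ordinal → Ordinal → Ordinal}
    (hG : IsCohyperation f G) : WeakCohyperation f G := hG.1

theorem IsCohyperation.apply_le_of_weakCohyperation {f : Ordinal → Ordinal}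
    {G h : Ordinal → Ordinal → Ordinal} (hG : IsCohyperation f G) (hh : WeakCohyperation f h)
    (ξ α : Ordinal) : h ξ α ≤ G ξ α := hG.2 h hh ξ α

section

variable {f : Ordinal → Ordinal} {G H : Ordinal → Ordinal → Ordinal} {ξ μ : Ordinal}

theorem WeakCohyperation.comp_eq_of_lt_mul (hG : WeakCohyperation f G)
    (hH : WeakCohyperation (G ξ) H) (hμ : IsPrincipal (· + ·) μ) (h1 : 1 < μ)
    (hHG : ∀ δ < μ, H δ = G (ξ * δ)) {ν : Ordinal} (hν : μ ≤ ν) {ρ : Ordinal}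
    (hρ : ρ < ξ * μ) : H ν ∘ G ρ = H ν := by
  have hξ : ξ ≠ 0 := by
    rintro rfl
    simp at hρ
  have hmul : ∀ δ < μ, H ν ∘ G (ξ * δ) = H ν := fun δ hδ ↦ by
    rw [← hHG δ hδ, ← hH.add_eq_comp, hμ.add_eq_right_of_le hδ hν]
  have hnat (n : ℕ) : (n : Ordinal) < μ :=
    (natCast_lt_omega0 n).trans_le (omega0_le_of_isSuccLimit (isSuccLimit_of_isPrincipal_add h1 hμ))
  have hmod : H ν ∘ G (ρ % ξ) = H ν := by
    funext α
    obtain ⟨n, hn⟩ := hG.exists_natCast_mul_apply_eq (mod_lt ρ hξ).le α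
    calc H ν (G (ρ % ξ) α) = H ν (G (ξ * n) (G (ρ % ξ) α)) := (congrFun (hmul n (hnat n)) _).symm
      _ = H ν (G (ξ * ↑(n + 1)) α) := by rw [hn]
      _ = H ν α := congrFun (hmul _ (hnat _)) α
  calc H ν ∘ G ρ = H ν ∘ G (ρ % ξ) ∘ G (ξ * (ρ / ξ)) := by rw [← hG.add_eq_comp, div_add_mod]
    _ = H ν := by rw [← Function.comp_assoc, hmod, hmul _ ((lt_mul_iff_div_lt hξ).1 hρ)]

theorem IsCohyperation.apply_le_mul_of_isPrincipal_add (hG : IsCohyperation f G)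
    (hH : WeakCohyperation (G ξ) H) (hξ : ξ ≠ 0) (hμ : IsPrincipal (· + ·) μ) (h1 : 1 < μ)
    (hHG : ∀ δ < μ, H δ = G (ξ * δ)) (α : Ordinal) : H μ α ≤ G (ξ * μ) α := by
  set ϖ := ξ * μ
  have hGw := hG.weakCohyperation
  have hϖ : IsPrincipal (· + ·) ϖ := isPrincipal_add_mul_of_isPrincipal_add ξ h1.ne' hμ
  have hϖ0 : ϖ ≠ 0 := mul_ne_zero hξ (zero_lt_one.trans h1).ne'
  have h1ϖ : 1 < ϖ := h1.trans_le (le_mul_right μ (pos_iff_ne_zero.2 hξ))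
  have hK := hGw.mod_comp_div (hH.mul_left μ) hϖ h1ϖ fun q hq ρ hρ ↦
    hGw.comp_eq_of_lt_mul hH hμ h1 hHG (le_mul_left μ (pos_iff_ne_zero.2 hq)) hρ
  calc H μ α = G (ϖ % ϖ) (H (μ * (ϖ / ϖ)) α) := by
        rw [mod_self, div_self hϖ0, mul_one, hGw.zero_eq_id, id]
    _ ≤ G ϖ α := hG.apply_le_of_weakCohyperation hK ϖ α

end

theorem cohyperation_of_cohyperate_general (f : Ordinal → Ordinal)
    (G : Ordinal → Ordinal → Ordinal) (hG : IsCohyperation f G)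
    (ξ : Ordinal) (H : Ordinal → Ordinal → Ordinal) (hH : IsCohyperation (G ξ) H) :
    ∀ ζ : Ordinal, H ζ = G (ξ * ζ) := by
  have hGw := hG.weakCohyperation
  have hHw := hH.weakCohyperation
  have hle : ∀ ζ α, G (ξ * ζ) α ≤ H ζ α := hH.apply_le_of_weakCohyperation (hGw.mul_left ξ)
  rcases eq_or_ne ξ 0 with rfl | hξ
  · refine fun ζ ↦ funext fun α ↦ (hle ζ α).antisymm' ?_
    rw [zero_mul, hGw.zero_eq_id]
    exact hHw.apply_le ζ α
  intro ζ
  induction ζ using WellFoundedLT.induction with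
  | _ ζ IH =>
  by_cases hζ : IsPrincipal (· + ·) ζ
  · rcases le_or_gt ζ 1 with h | h1
    · rcases Order.le_one_iff.1 h with rfl | rfl
      · rw [mul_zero, hGw.zero_eq_id, hHw.zero_eq_id]
      · rw [mul_one, hHw.one_eq]
    · exact funext fun α ↦ (hG.apply_le_mul_of_isPrincipal_add hHw hξ hζ h1 IH α).antisymm (hle ζ α)
  · obtain ⟨x, hx, y, hy, rfl⟩ := exists_lt_add_of_not_isPrincipal_add hζ
    rw [hHw.add_eq_comp, IH x hx, IH y hy, mul_add, hGw.add_eq_comp]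

theorem cohyperation_of_cohyperate (f : Ordinal → Ordinal) (hf : Initial f)
    (G : Ordinal → Ordinal → Ordinal) (hG : IsCohyperation f G)
    (ξ : Ordinal) (H : Ordinal → Ordinal → Ordinal) (hH : IsCohyperation (G ξ) H) :
    ∀ ζ : Ordinal, H ζ = G (ξ * ζ) :=
  cohyperation_of_cohyperate_general f G hG ξ H hH
end
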